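/- arXiv:1603.02355 — 3 statements merged into one kernel-verified Lean document; each statement's English description precedes it below -/
import Mathlib

section
/- For two pairs of commensurable subspaces A ~ B and A' ~ B' of V such that all relevant intersections/sums are commensurable, the relative dimensions satisfy [A|B] + [A'|B'] = [A∩A'|B∩B'] + [A+A'|B+B']. -/
def SubspaceCommensurable {k V : Type*} [Field k] [AddCommGroup V] [Module k V]
    (A B : Submodule k V) : Prop :=
  FiniteDimensional k (A ⧸ ((A ⊓ B).comap A.subtype)) ∧
  FiniteDimensional k (B ⧸ ((A ⊓ B).comap B.subtype))

noncomputable def relDim {k V : Type*} [Field k] [AddCommGroup V] [Module k V]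
    (A B : Submodule k V) : ℤ :=
  (Module.finrank k (A ⧸ ((A ⊓ B).comap A.subtype)) : ℤ) -
  (Module.finrank k (B ⧸ ((A ⊓ B).comap B.subtype)) : ℤ)


open Module Submodule

section Aux

variable {k V : Type*} [Field k] [AddCommGroup V] [Module k V]

private noncomputable def qd (A C : Submodule k V) : ℤ :=
  (Module.finrank k (A ⧸ (C.comap A.subtype)) : ℤ)

private lemma key_exists (A B C : Submodule k V) (hCB : C ≤ B) (hBA : B ≤ A) :
    ∃ φ : (A ⧸ C.comap A.subtype) →ₗ[k] (A ⧸ B.comap A.subtype),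
      Function.Surjective φ ∧
      Nonempty ((LinearMap.ker φ) ≃ₗ[k] (B ⧸ C.comap B.subtype)) := by
  set S : Submodule k A := C.comap A.subtype with hS
  set T : Submodule k A := B.comap A.subtype with hT
  have hST : S ≤ T := comap_mono hCB
  have hST' : S ≤ T.comap (LinearMap.id : A →ₗ[k] A) := hST
  refine ⟨S.mapQ T LinearMap.id hST', ?_, ?_⟩
  · intro y
    obtain ⟨x, rfl⟩ := T.mkQ_surjective y
    exact ⟨S.mkQ x, by simp [Submodule.mapQ_apply]⟩
  · -- kernel computation
    have hker : LinearMap.ker (S.mapQ T LinearMap.id hST') = T.map S.mkQ := by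
      rw [Submodule.mapQ, Submodule.ker_liftQ]
      congr 1
      rw [LinearMap.ker_comp, Submodule.ker_mkQ, Submodule.comap_id]
    set g : B →ₗ[k] (A ⧸ S) := S.mkQ.comp (Submodule.inclusion hBA) with hg
    have hgker : LinearMap.ker g = C.comap B.subtype := by
      ext x
      simp [hg, LinearMap.mem_ker, Submodule.Quotient.mk_eq_zero, hS]
    have hgrange : LinearMap.range g = T.map S.mkQ := by
      rw [hg, LinearMap.range_comp, Submodule.range_inclusion]
    exact ⟨(LinearEquiv.ofEq _ _ (hker.trans hgrange.symm)).trans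
      ((g.quotKerEquivRange.symm).trans (Submodule.quotEquivOfEq _ _ hgker))⟩

private lemma fin_down₁ (A B C : Submodule k V) (hCB : C ≤ B) (hBA : B ≤ A)
    [FiniteDimensional k (A ⧸ C.comap A.subtype)] :
    FiniteDimensional k (A ⧸ B.comap A.subtype) := by
  obtain ⟨φ, hs, -⟩ := key_exists A B C hCB hBA
  exact Module.Finite.of_surjective φ hs

private lemma fin_down₂ (A B C : Submodule k V) (hCB : C ≤ B) (hBA : B ≤ A)
    [FiniteDimensional k (A ⧸ C.comap A.subtype)] :
    FiniteDimensional k (B ⧸ C.comap B.subtype) := by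
  obtain ⟨φ, -, ⟨e⟩⟩ := key_exists A B C hCB hBA
  exact e.finiteDimensional

private lemma fin_up (A B C : Submodule k V) (hCB : C ≤ B) (hBA : B ≤ A)
    [FiniteDimensional k (A ⧸ B.comap A.subtype)]
    [FiniteDimensional k (B ⧸ C.comap B.subtype)] :
    FiniteDimensional k (A ⧸ C.comap A.subtype) := by
  obtain ⟨φ, hs, ⟨e⟩⟩ := key_exists A B C hCB hBA
  have h1 := Submodule.rank_quotient_add_rank (LinearMap.ker φ)
  have h2 : Module.rank k ((A ⧸ C.comap A.subtype) ⧸ (LinearMap.ker φ)) < Cardinal.aleph0 := by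
    have e2 : ((A ⧸ C.comap A.subtype) ⧸ (LinearMap.ker φ)) ≃ₗ[k]
        (A ⧸ B.comap A.subtype) :=
      φ.quotKerEquivRange.trans
        ((LinearEquiv.ofEq _ _ (LinearMap.range_eq_top.mpr hs)).trans (Submodule.topEquiv))
    rw [e2.rank_eq]
    exact Module.rank_lt_aleph0 k _
  have h3 : Module.rank k (LinearMap.ker φ) < Cardinal.aleph0 := by
    rw [e.rank_eq]; exact Module.rank_lt_aleph0 k _
  have : Module.rank k (A ⧸ C.comap A.subtype) < Cardinal.aleph0 := by
    rw [← h1]; exact Cardinal.add_lt_aleph0 h2 h3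
  exact Module.rank_lt_aleph0_iff.mp this

private lemma qd_chain (A B C : Submodule k V) (hCB : C ≤ B) (hBA : B ≤ A)
    [FiniteDimensional k (A ⧸ C.comap A.subtype)] :
    qd A C = qd A B + qd B C := by
  obtain ⟨φ, hs, ⟨e⟩⟩ := key_exists A B C hCB hBA
  have h1 := LinearMap.finrank_range_add_finrank_ker φ
  have h2 : finrank k (LinearMap.range φ) = finrank k (A ⧸ B.comap A.subtype) := by
    rw [LinearMap.range_eq_top.mpr hs]; exact finrank_top k _
  have h3 : finrank k (LinearMap.ker φ) = finrank k (B ⧸ C.comap B.subtype) := e.finrank_eq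
  rw [h2, h3] at h1
  unfold qd
  exact_mod_cast h1.symm

/-- Second isomorphism: the equivalence underlying `qd` for sups. -/
private lemma qd_sup_equiv (A A' : Submodule k V) :
    Nonempty ((A ⧸ (A ⊓ A').comap A.subtype) ≃ₗ[k]
      (↥(A ⊔ A') ⧸ A'.comap (A ⊔ A').subtype)) :=
  ⟨LinearMap.quotientInfEquivSupQuotient A A'⟩

private lemma qd_sup (A A' : Submodule k V) : qd (A ⊔ A') A' = qd A (A ⊓ A') := by
  obtain ⟨e⟩ := qd_sup_equiv A A'
  unfold qd
  rw [e.finrank_eq]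

private lemma fin_sup_iff (A A' : Submodule k V) :
    FiniteDimensional k (A ⧸ (A ⊓ A').comap A.subtype) ↔
      FiniteDimensional k (↥(A ⊔ A') ⧸ A'.comap (A ⊔ A').subtype) := by
  obtain ⟨e⟩ := qd_sup_equiv A A'
  exact ⟨fun h => e.finiteDimensional, fun h => e.symm.finiteDimensional⟩

end Aux

section Main

variable {k V : Type*} [Field k] [AddCommGroup V] [Module k V]

private lemma L2 (A B A' : Submodule k V) (hBA : B ≤ A)
    [hf : FiniteDimensional k (A ⧸ B.comap A.subtype)] :
    FiniteDimensional k (↥(A ⊔ A') ⧸ (B ⊔ A').comap (A ⊔ A').subtype) ∧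
    FiniteDimensional k (↥(A ⊓ A') ⧸ (B ⊓ A').comap (A ⊓ A').subtype) ∧
    qd A B = qd (A ⊔ A') (B ⊔ A') + qd (A ⊓ A') (B ⊓ A') := by
  have h1 : B ≤ B ⊔ (A ⊓ A') := le_sup_left
  have h2 : B ⊔ (A ⊓ A') ≤ A := sup_le hBA inf_le_left
  have e1 : A ⊔ (B ⊔ A') = A ⊔ A' := by rw [← sup_assoc, sup_eq_left.mpr hBA]
  have e2 : A ⊓ (B ⊔ A') = B ⊔ (A ⊓ A') := by
    rw [inf_comm, sup_inf_assoc_of_le _ hBA, inf_comm]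
  have e3 : (A ⊓ A') ⊔ B = B ⊔ (A ⊓ A') := sup_comm _ _
  have e4 : (A ⊓ A') ⊓ B = B ⊓ A' := by
    apply le_antisymm
    · exact le_inf inf_le_right (inf_le_left.trans inf_le_right)
    · exact le_inf (le_inf (inf_le_left.trans hBA) inf_le_right) inf_le_left
  have hq1 : qd (A ⊔ A') (B ⊔ A') = qd A (B ⊔ (A ⊓ A')) := by
    have h := qd_sup A (B ⊔ A')
    rw [e1, e2] at h; exact h
  have hq2 : qd (B ⊔ (A ⊓ A')) B = qd (A ⊓ A') (B ⊓ A') := by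
    have h := qd_sup (A ⊓ A') B
    rw [e3, e4] at h; exact h
  haveI fa : FiniteDimensional k (A ⧸ (B ⊔ (A ⊓ A')).comap A.subtype) :=
    fin_down₁ A (B ⊔ (A ⊓ A')) B h1 h2
  haveI fb : FiniteDimensional k (↥(B ⊔ (A ⊓ A')) ⧸ B.comap (B ⊔ (A ⊓ A')).subtype) :=
    fin_down₂ A (B ⊔ (A ⊓ A')) B h1 h2
  have fin1 : FiniteDimensional k (↥(A ⊔ A') ⧸ (B ⊔ A').comap (A ⊔ A').subtype) := by
    have h := fin_sup_iff A (B ⊔ A')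
    rw [e1, e2] at h
    exact h.mp fa
  have fin2 : FiniteDimensional k (↥(A ⊓ A') ⧸ (B ⊓ A').comap (A ⊓ A').subtype) := by
    have h := fin_sup_iff (A ⊓ A') B
    rw [e3, e4] at h
    exact h.mpr fb
  refine ⟨fin1, fin2, ?_⟩
  rw [hq1, ← hq2]
  exact qd_chain A (B ⊔ (A ⊓ A')) B h1 h2

private lemma reduced (A B A' B' : Submodule k V) (hBA : B ≤ A) (hB'A' : B' ≤ A')
    [f1 : FiniteDimensional k (A ⧸ B.comap A.subtype)]
    [f2 : FiniteDimensional k (A' ⧸ B'.comap A'.subtype)] :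
    FiniteDimensional k (↥(A ⊓ A') ⧸ (B ⊓ B').comap (A ⊓ A').subtype) ∧
    FiniteDimensional k (↥(A ⊔ A') ⧸ (B ⊔ B').comap (A ⊔ A').subtype) ∧
    qd A B + qd A' B' = qd (A ⊓ A') (B ⊓ B') + qd (A ⊔ A') (B ⊔ B') := by
  obtain ⟨s1, i1, q1⟩ := L2 A B A' hBA
  obtain ⟨s2, i2, q2⟩ := L2 A' B' B hB'A'
  rw [sup_comm A' B, sup_comm B' B] at s2 q2
  rw [inf_comm A' B, inf_comm B' B] at i2 q2
  have hsub1 : B ⊔ B' ≤ B ⊔ A' := sup_le_sup_left hB'A' B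
  have hsub2 : B ⊔ A' ≤ A ⊔ A' := sup_le_sup_right hBA A'
  have hsub3 : B ⊓ B' ≤ B ⊓ A' := inf_le_inf_left B hB'A'
  have hsub4 : B ⊓ A' ≤ A ⊓ A' := inf_le_inf_right A' hBA
  haveI := s1; haveI := s2; haveI := i1; haveI := i2
  haveI fs : FiniteDimensional k (↥(A ⊔ A') ⧸ (B ⊔ B').comap (A ⊔ A').subtype) :=
    fin_up (A ⊔ A') (B ⊔ A') (B ⊔ B') hsub1 hsub2
  have qs : qd (A ⊔ A') (B ⊔ B') = qd (A ⊔ A') (B ⊔ A') + qd (B ⊔ A') (B ⊔ B') :=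
    qd_chain _ _ _ hsub1 hsub2
  haveI fi : FiniteDimensional k (↥(A ⊓ A') ⧸ (B ⊓ B').comap (A ⊓ A').subtype) :=
    fin_up (A ⊓ A') (B ⊓ A') (B ⊓ B') hsub3 hsub4
  have qi : qd (A ⊓ A') (B ⊓ B') = qd (A ⊓ A') (B ⊓ A') + qd (B ⊓ A') (B ⊓ B') :=
    qd_chain _ _ _ hsub3 hsub4
  exact ⟨fi, fs, by rw [q1, q2, qs, qi]; ring⟩

end Main

/-- `[A|B] + [A'|B'] = [A∩A'|B∩B'] + [A+A'|B+B']`. -/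
theorem stmt4 {k V : Type*} [Field k] [AddCommGroup V] [Module k V]
    (A B A' B' : Submodule k V)
    (h : SubspaceCommensurable A B) (h' : SubspaceCommensurable A' B')
    (hInf : SubspaceCommensurable (A ⊓ A') (B ⊓ B'))
    (hSup : SubspaceCommensurable (A ⊔ A') (B ⊔ B')) :
    relDim A B + relDim A' B' = relDim (A ⊓ A') (B ⊓ B') + relDim (A ⊔ A') (B ⊔ B') := by
  obtain ⟨hA, hB⟩ := h
  haveI := hA; haveI := hB; haveI := h'.1; haveI := h'.2
  obtain ⟨-, rs1, r1⟩ := reduced A (A ⊓ B) A' (A' ⊓ B') inf_le_left inf_le_left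
  obtain ⟨-, rs2, r2⟩ := reduced B (A ⊓ B) B' (A' ⊓ B') inf_le_right inf_le_right
  have eInf : (A ⊓ B) ⊓ (A' ⊓ B') = (A ⊓ A') ⊓ (B ⊓ B') := inf_inf_inf_comm A B A' B'
  rw [eInf] at r1 r2
  have hSY : (A ⊓ B) ⊔ (A' ⊓ B') ≤ (A ⊔ A') ⊓ (B ⊔ B') :=
    sup_le (le_inf (inf_le_left.trans le_sup_left) (inf_le_right.trans le_sup_left))
      (le_inf (inf_le_left.trans le_sup_right) (inf_le_right.trans le_sup_right))
  haveI := rs1; haveI := rs2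
  have c1 := qd_chain (A ⊔ A') ((A ⊔ A') ⊓ (B ⊔ B')) ((A ⊓ B) ⊔ (A' ⊓ B')) hSY inf_le_left
  have c2 := qd_chain (B ⊔ B') ((A ⊔ A') ⊓ (B ⊔ B')) ((A ⊓ B) ⊔ (A' ⊓ B')) hSY inf_le_right
  rw [show relDim A B = qd A (A ⊓ B) - qd B (A ⊓ B) from rfl,
    show relDim A' B' = qd A' (A' ⊓ B') - qd B' (A' ⊓ B') from rfl,
    show relDim (A ⊓ A') (B ⊓ B') =
      qd (A ⊓ A') ((A ⊓ A') ⊓ (B ⊓ B')) - qd (B ⊓ B') ((A ⊓ A') ⊓ (B ⊓ B')) from rfl,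
    show relDim (A ⊔ A') (B ⊔ B') =
      qd (A ⊔ A') ((A ⊔ A') ⊓ (B ⊔ B')) - qd (B ⊔ B') ((A ⊔ A') ⊓ (B ⊔ B')) from rfl]
  linarith [r1, r2, c1, c2]
end

section
/- The determinant symbol ν_L(f,g) := ν₁(f)ν₂(g) − ν₂(f)ν₁(g) vanishes whenever f + g = 1 (with f, g, 1−f all nonzero), provided the rank-2 valuation (ν₁,ν₂) is ordered lexicographically and satisfies the ultrametric inequality: ν(x+y) ≥ min(ν(x), ν(y)) in the lexicographic order on ℤ ⊕ ℤ. Hence ν_L factors through K₂(L). -/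
/-!
Write `v x = (ν₁ x, ν₂ x)` in the lexicographically ordered group `ℤ ×ₗ ℤ`. Applying the
ultrametric inequality to `f + g = 1`, `1 - f = g` and `1 - g = f` shows that the minimum of
`v f`, `v g`, `v 1 = 0` is attained twice, so `v f = 0`, `v g = 0` or `v f = v g`. In each case
the determinant of `v f` and `v g` vanishes.
-/

theorem eq_or_eq_or_eq_of_min_le {α : Type*} [LinearOrder α] {a b c : α}
    (hab : min a b ≤ c) (hbc : min b c ≤ a) (hca : min c a ≤ b) :
    a = b ∨ b = c ∨ a = c := by
  simp only [min_le_iff] at hab hbc hca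
  grind

theorem map_one_of_map_mul {M Γ : Type*} [Monoid M] [AddGroup Γ] {v : M → Γ}
    (hv : ∀ a b, v (a * b) = v a + v b) : v 1 = 0 := by
  simpa using hv 1 1

theorem map_neg_of_map_mul {M Γ : Type*} [Monoid M] [HasDistribNeg M] [AddCommGroup Γ]
    [IsAddTorsionFree Γ] {v : M → Γ} (hv : ∀ a b, v (a * b) = v a + v b) (x : M) :
    v (-x) = v x := by
  have h : v (-1) + v (-1) = 0 := by rw [← hv, neg_one_mul, neg_neg, map_one_of_map_mul hv]
  have h₀ : v (-1) = 0 := self_eq_neg.mp (eq_neg_of_add_eq_zero_left h)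
  rw [← neg_one_mul, hv, h₀, zero_add]

theorem eq_or_eq_zero_or_eq_zero_of_add_eq_one {L Γ : Type*} [Ring L] [AddCommGroup Γ]
    [LinearOrder Γ] [IsOrderedAddMonoid Γ] {v : Lˣ → Γ} (hv : ∀ a b, v (a * b) = v a + v b)
    (hultra : ∀ x y z : Lˣ, (x : L) + y = z → min (v x) (v y) ≤ v z)
    {f g : Lˣ} (hfg : (f : L) + g = 1) :
    v f = v g ∨ v g = 0 ∨ v f = 0 := by
  have hsum := hultra f g 1 (by simpa using hfg)
  have hg := hultra 1 (-f) g (by push_cast; rw [← hfg]; abel)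
  have hf := hultra 1 (-g) f (by push_cast; rw [← hfg]; abel)
  rw [map_one_of_map_mul hv] at hsum hg hf
  rw [map_neg_of_map_mul hv] at hg hf
  exact eq_or_eq_or_eq_of_min_le hsum (min_comm (v g) 0 ▸ hf) hg

theorem stmt9_general {L : Type*} [Field L] (ν₁ ν₂ : Lˣ → ℤ)
    (h₁ : ∀ a b : Lˣ, ν₁ (a * b) = ν₁ a + ν₁ b)
    (h₂ : ∀ a b : Lˣ, ν₂ (a * b) = ν₂ a + ν₂ b)
    (hultra : ∀ x y z : Lˣ, (x : L) + (y : L) = (z : L) →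
      min (toLex ((ν₁ x, ν₂ x) : ℤ × ℤ)) (toLex ((ν₁ y, ν₂ y) : ℤ × ℤ))
        ≤ toLex ((ν₁ z, ν₂ z) : ℤ × ℤ))
    (f g : Lˣ) (hfg : (f : L) + (g : L) = 1) :
    ν₁ f * ν₂ g - ν₂ f * ν₁ g = 0 := by
  have hv : ∀ a b : Lˣ, toLex (ν₁ (a * b), ν₂ (a * b)) =
      toLex (ν₁ a, ν₂ a) + toLex (ν₁ b, ν₂ b) := fun a b => by
    rw [h₁, h₂]; rfl
  rcases eq_or_eq_zero_or_eq_zero_of_add_eq_one hv hultra hfg with h | h | h <;>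
    simp only [← toLex_zero, toLex_inj, Prod.ext_iff, Prod.fst_zero, Prod.snd_zero] at h <;>
    rw [h.1, h.2] <;> ring

/-- The determinant symbol of a lexicographically ordered rank-2 valuation satisfying the
ultrametric inequality vanishes on Steinberg pairs `f + g = 1`; hence it factors through
`K₂(L)`. -/
theorem stmt9 {L : Type*} [Field L] (ν₁ ν₂ : Lˣ → ℤ)
    (h₁ : ∀ a b : Lˣ, ν₁ (a * b) = ν₁ a + ν₁ b)
    (h₂ : ∀ a b : Lˣ, ν₂ (a * b) = ν₂ a + ν₂ b)
    (hsurj : Function.Surjective fun x : Lˣ => (ν₁ x, ν₂ x))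
    (hultra : ∀ x y z : Lˣ, (x : L) + (y : L) = (z : L) →
      min (toLex ((ν₁ x, ν₂ x) : ℤ × ℤ)) (toLex ((ν₁ y, ν₂ y) : ℤ × ℤ))
        ≤ toLex ((ν₁ z, ν₂ z) : ℤ × ℤ))
    (f g : Lˣ) (hfg : (f : L) + (g : L) = 1) :
    ν₁ f * ν₂ g - ν₂ f * ν₁ g = 0 :=
  stmt9_general ν₁ ν₂ h₁ h₂ hultra f g hfg
end

section
/- For the rational function field k(x) viewed inside k((x)) (expansion at 0) and inside k((1/x)) (expansion at ∞), and at each closed point p of ℙ¹, the tame symbols of two nonzero rational functions f, g satisfy the product formula: the product over all closed points p of ℙ¹_k of Norm_{k(p)/k} of the tame symbol at p equals 1 (Weil reciprocity for ℙ¹). -/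
/-- The valuation of a rational function at a finite point `a` of `ℙ¹`. -/
noncomputable def nuAt {k : Type*} [Field k] (a : k) (f : RatFunc k) : ℤ :=
  (f.num.rootMultiplicity a : ℤ) - (f.denom.rootMultiplicity a : ℤ)

/-- The tame symbol of `f, g` at a finite point `a` of `ℙ¹`. -/
noncomputable def tameAt {k : Type*} [Field k] (a : k) (f g : RatFunc k) : k :=
  (-1 : k) ^ (nuAt a f * nuAt a g) *
    RatFunc.eval (RingHom.id k) a (f ^ nuAt a g * g ^ (-nuAt a f))

/-- The valuation of a rational function at `∞`. -/
noncomputable def nuInf {k : Type*} [Field k] (f : RatFunc k) : ℤ := -f.intDegree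

/-- The tame symbol of `f, g` at `∞`: the value at `∞` of the valuation-zero unit
`(−1)^{ν(f)ν(g)} f^{ν(g)} g^{−ν(f)}`, i.e. the ratio of its leading coefficients. -/
noncomputable def tameInf {k : Type*} [Field k] (f g : RatFunc k) : k :=
  (-1 : k) ^ (nuInf f * nuInf g) *
    ((f ^ nuInf g * g ^ (-nuInf f)).num.leadingCoeff /
      (f ^ nuInf g * g ^ (-nuInf f)).denom.leadingCoeff)

/-!
The product of all tame symbols is multiplicative in each argument and is inverted when the
arguments are swapped. Both facts are formal consequences of the shape
`(-1)^(ν f * ν g) * residue (f ^ ν g * g ^ (-ν f))` of a tame symbol: they only use that each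
valuation `ν` is additive and each residue map is multiplicative on elements of valuation zero.
Over an algebraically closed field the nonzero rational functions are generated by the nonzero
constants and the linear polynomials `X - a`, so it suffices to check the law on pairs of these,
where at most three of the symbols differ from `1` and each is computed explicitly.
-/

open Polynomial

namespace RatFunc

variable {k : Type*} [Field k]

theorem leadingCoeff_num_mul (f g : RatFunc k) :
    (f * g).num.leadingCoeff = f.num.leadingCoeff * g.num.leadingCoeff := by
  simpa [f.monic_denom.leadingCoeff, g.monic_denom.leadingCoeff,
    (f * g).monic_denom.leadingCoeff] using congrArg leadingCoeff (num_denom_mul f g)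

theorem leadingCoeff_num_inv (f : RatFunc k) :
    f⁻¹.num.leadingCoeff = f.num.leadingCoeff⁻¹ := by
  rcases eq_or_ne f 0 with rfl | hf
  · simp
  · refine eq_inv_of_mul_eq_one_right ?_
    rw [← leadingCoeff_num_mul, mul_inv_cancel₀ hf, num_one, leadingCoeff_one]

theorem X_sub_C_eq_algebraMap (a : k) :
    X - C a = algebraMap k[X] (RatFunc k) (Polynomial.X - Polynomial.C a) := by
  simp

theorem X_sub_C_ne_zero (a : k) : X - C a ≠ 0 := by
  rw [X_sub_C_eq_algebraMap]
  exact algebraMap_ne_zero (Polynomial.X_sub_C_ne_zero a)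

theorem eq_one_of_map_mul_of_X_sub_C_of_C [IsAlgClosed k] {M : Type*} [Monoid M]
    {φ : RatFunc k → M} (hmul : ∀ {f g : RatFunc k}, f ≠ 0 → g ≠ 0 → φ (f * g) = φ f * φ g)
    (hX : ∀ a, φ (X - C a) = 1) (hC : ∀ c, c ≠ 0 → φ (C c) = 1)
    {f : RatFunc k} (hf : f ≠ 0) : φ f = 1 := by
  have hprod (s : Multiset k) :
      φ (algebraMap k[X] (RatFunc k) (s.map fun a => Polynomial.X - Polynomial.C a).prod) = 1 := by
    induction s using Multiset.induction_on with
    | empty => simpa using hC 1 one_ne_zero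
    | cons a s ih =>
      rw [Multiset.map_cons, Multiset.prod_cons, map_mul, ← X_sub_C_eq_algebraMap,
        hmul (X_sub_C_ne_zero a) (algebraMap_ne_zero (monic_multisetProd_X_sub_C s).ne_zero),
        hX, ih, mul_one]
  have hpoly {p : k[X]} (hp : p ≠ 0) : φ (algebraMap k[X] (RatFunc k) p) = 1 := by
    rw [← C_leadingCoeff_mul_prod_multiset_X_sub_C (IsAlgClosed.card_roots_eq_natDegree (p := p)),
      map_mul,
      hmul (algebraMap_ne_zero (Polynomial.C_ne_zero.2 (leadingCoeff_ne_zero.2 hp)))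
        (algebraMap_ne_zero (monic_multisetProd_X_sub_C _).ne_zero),
      algebraMap_C, hC _ (leadingCoeff_ne_zero.2 hp), hprod, one_mul]
  have hden := algebraMap_ne_zero f.denom_ne_zero
  have hnum : f * algebraMap k[X] (RatFunc k) f.denom = algebraMap k[X] (RatFunc k) f.num :=
    (div_eq_iff hden).1 f.num_div_denom |>.symm
  calc φ f = φ f * φ (algebraMap k[X] (RatFunc k) f.denom) := by rw [hpoly f.denom_ne_zero, mul_one]
    _ = φ (algebraMap k[X] (RatFunc k) f.num) := by rw [← hmul hf hden, hnum]
    _ = 1 := hpoly (num_ne_zero hf)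

end RatFunc

namespace WeilReciprocity

structure TamePlace (K k : Type*) [Field K] [Field k] where
  ν : K → ℤ
  residue : K → k
  ν_mul {f g : K} : f ≠ 0 → g ≠ 0 → ν (f * g) = ν f + ν g
  residue_mul {f g : K} : ν f = 0 → ν g = 0 → residue (f * g) = residue f * residue g
  residue_one : residue 1 = 1

namespace TamePlace

variable {K k : Type*} [Field K] [Field k] (P : TamePlace K k) {f g : K}

def symbol (f g : K) : k := (-1) ^ (P.ν f * P.ν g) * P.residue (f ^ P.ν g * g ^ (-P.ν f))

theorem ν_one : P.ν 1 = 0 := by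
  simpa using P.ν_mul (one_ne_zero (α := K)) one_ne_zero

theorem ν_inv (hf : f ≠ 0) : P.ν f⁻¹ = -P.ν f := by
  have h := P.ν_mul hf (inv_ne_zero hf)
  rw [mul_inv_cancel₀ hf, ν_one] at h
  omega

theorem ν_zpow (hf : f ≠ 0) (n : ℤ) : P.ν (f ^ n) = n * P.ν f := by
  induction n using Int.induction_on with
  | zero => simp [ν_one]
  | succ n ih => rw [zpow_add_one₀ hf, P.ν_mul (zpow_ne_zero _ hf) hf, ih]; ring
  | pred n ih =>
    rw [zpow_sub_one₀ hf, P.ν_mul (zpow_ne_zero _ hf) (inv_ne_zero hf), ih, P.ν_inv hf]; ring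

theorem residue_mul_residue_inv (hf : f ≠ 0) (hν : P.ν f = 0) :
    P.residue f * P.residue f⁻¹ = 1 := by
  rw [← P.residue_mul hν (by rw [P.ν_inv hf, hν, neg_zero]), mul_inv_cancel₀ hf, residue_one]

theorem residue_inv (hf : f ≠ 0) (hν : P.ν f = 0) : P.residue f⁻¹ = (P.residue f)⁻¹ :=
  eq_inv_of_mul_eq_one_right (P.residue_mul_residue_inv hf hν)

theorem residue_ne_zero (hf : f ≠ 0) (hν : P.ν f = 0) : P.residue f ≠ 0 :=
  left_ne_zero_of_mul_eq_one (P.residue_mul_residue_inv hf hν)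

theorem residue_zpow (hf : f ≠ 0) (hν : P.ν f = 0) (n : ℤ) :
    P.residue (f ^ n) = P.residue f ^ n := by
  have hνn (n : ℤ) : P.ν (f ^ n) = 0 := by rw [P.ν_zpow hf, hν, mul_zero]
  induction n using Int.induction_on with
  | zero => simp [residue_one]
  | succ n ih =>
    rw [zpow_add_one₀ hf, P.residue_mul (hνn _) hν, ih, zpow_add_one₀ (P.residue_ne_zero hf hν)]
  | pred n ih =>
    rw [zpow_sub_one₀ hf, P.residue_mul (hνn _) (by rw [P.ν_inv hf, hν, neg_zero]), ih,
      P.residue_inv hf hν, zpow_sub_one₀ (P.residue_ne_zero hf hν)]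

theorem ν_zpow_mul_zpow (hf : f ≠ 0) (hg : g ≠ 0) (m n : ℤ) :
    P.ν (f ^ m * g ^ n) = m * P.ν f + n * P.ν g := by
  rw [P.ν_mul (zpow_ne_zero _ hf) (zpow_ne_zero _ hg), P.ν_zpow hf, P.ν_zpow hg]

theorem symbol_eq_one (hf : P.ν f = 0) (hg : P.ν g = 0) : P.symbol f g = 1 := by
  simp [symbol, hf, hg, residue_one]

theorem symbol_of_ν_left_eq_zero (hf : f ≠ 0) (hν : P.ν f = 0) (g : K) :
    P.symbol f g = P.residue f ^ P.ν g := by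
  simp [symbol, hν, P.residue_zpow hf hν]

theorem symbol_self (hf : f ≠ 0) : P.symbol f f = (-1) ^ (P.ν f * P.ν f) := by
  simp [symbol, zpow_neg, mul_inv_cancel₀ (zpow_ne_zero _ hf), residue_one]

theorem symbol_mul_left {f₁ f₂ : K} (hf₁ : f₁ ≠ 0) (hf₂ : f₂ ≠ 0) (hg : g ≠ 0) :
    P.symbol (f₁ * f₂) g = P.symbol f₁ g * P.symbol f₂ g := by
  have hsplit : (f₁ * f₂) ^ P.ν g * g ^ (-(P.ν f₁ + P.ν f₂)) =
      (f₁ ^ P.ν g * g ^ (-P.ν f₁)) * (f₂ ^ P.ν g * g ^ (-P.ν f₂)) := by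
    rw [mul_zpow, neg_add, zpow_add₀ hg]; ring
  have hν₁ := P.ν_zpow_mul_zpow hf₁ hg (P.ν g) (-P.ν f₁)
  have hν₂ := P.ν_zpow_mul_zpow hf₂ hg (P.ν g) (-P.ν f₂)
  rw [symbol, symbol, symbol, P.ν_mul hf₁ hf₂, hsplit, P.residue_mul (by linarith) (by linarith),
    add_mul, zpow_add₀ (neg_ne_zero.2 one_ne_zero)]
  ring

theorem symbol_swap (hf : f ≠ 0) (hg : g ≠ 0) : P.symbol g f = (P.symbol f g)⁻¹ := by
  have hinv : g ^ P.ν f * f ^ (-P.ν g) = (f ^ P.ν g * g ^ (-P.ν f))⁻¹ := by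
    rw [mul_inv, zpow_neg, zpow_neg, inv_inv, mul_comm]
  have hν := P.ν_zpow_mul_zpow hf hg (P.ν g) (-P.ν f)
  have hsign : ((-1 : k) ^ (P.ν f * P.ν g))⁻¹ = (-1) ^ (P.ν g * P.ν f) := by
    rw [← inv_zpow, inv_neg_one, mul_comm]
  rw [symbol, symbol, hinv, P.residue_inv (mul_ne_zero (zpow_ne_zero _ hf) (zpow_ne_zero _ hg))
    (by linarith), mul_inv, hsign]

end TamePlace

variable {k : Type*} [Field k]

theorem nuAt_mul (a : k) {f g : RatFunc k} (hf : f ≠ 0) (hg : g ≠ 0) :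
    nuAt a (f * g) = nuAt a f + nuAt a g := by
  have hmult := congrArg (rootMultiplicity a) (RatFunc.num_denom_mul f g)
  have hnum := RatFunc.num_ne_zero (mul_ne_zero hf hg)
  have hdens := mul_ne_zero f.denom_ne_zero g.denom_ne_zero
  have hnums := mul_ne_zero (RatFunc.num_ne_zero hf) (RatFunc.num_ne_zero hg)
  rw [rootMultiplicity_mul (mul_ne_zero hnum hdens), rootMultiplicity_mul hdens,
    rootMultiplicity_mul (mul_ne_zero hnums (f * g).denom_ne_zero),
    rootMultiplicity_mul hnums] at hmult
  simp only [nuAt]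
  omega

theorem nuAt_algebraMap (a : k) (p : k[X]) :
    nuAt a (algebraMap k[X] (RatFunc k) p) = rootMultiplicity a p := by
  simp [nuAt]

theorem finite_support_nuAt (f : RatFunc k) : (Function.support fun a => nuAt a f).Finite := by
  classical
  refine (f.num.roots.toFinset ∪ f.denom.roots.toFinset).finite_toSet.subset fun a ha => ?_
  simp only [Function.mem_support, nuAt] at ha
  simp only [Finset.coe_union, Set.mem_union, Finset.mem_coe, Multiset.mem_toFinset,
    ← Multiset.count_pos, count_roots]
  omega

theorem denom_eval_ne_zero_of_nuAt_eq_zero {a : k} {f : RatFunc k} (h : nuAt a f = 0) :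
    f.denom.eval a ≠ 0 := by
  intro hden
  have hnum : f.num.IsRoot a := by
    have hden_pos := (rootMultiplicity_pos f.denom_ne_zero).2 hden
    exact (rootMultiplicity_pos'.1 (by unfold nuAt at h; omega)).2
  obtain ⟨u, v, huv⟩ := f.isCoprime_num_denom
  simpa [hnum.eq_zero, hden] using congrArg (eval a) huv

@[simps]
noncomputable def placeAt (a : k) : TamePlace (RatFunc k) k where
  ν := nuAt a
  residue := RatFunc.eval (RingHom.id k) a
  ν_mul := nuAt_mul a
  residue_mul hf hg := RatFunc.eval_mul _ _ (denom_eval_ne_zero_of_nuAt_eq_zero hf)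
    (denom_eval_ne_zero_of_nuAt_eq_zero hg)
  residue_one := RatFunc.eval_one _ _

@[simps]
noncomputable def placeInf : TamePlace (RatFunc k) k where
  ν := nuInf
  residue f := f.num.leadingCoeff
  ν_mul hf hg := by simp only [nuInf, RatFunc.intDegree_mul hf hg]; ring
  residue_mul _ _ := RatFunc.leadingCoeff_num_mul _ _
  residue_one := by simp

theorem tameAt_eq_symbol (a : k) (f g : RatFunc k) : tameAt a f g = (placeAt a).symbol f g := rfl

theorem tameInf_eq_symbol (f g : RatFunc k) : tameInf f g = placeInf.symbol f g := by
  rw [tameInf, RatFunc.monic_denom _ |>.leadingCoeff, div_one]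
  rfl

noncomputable def weilProduct (f g : RatFunc k) : k :=
  (∏ᶠ a, (placeAt a).symbol f g) * placeInf.symbol f g

theorem mulSupport_symbol_subset (f g : RatFunc k) :
    Function.mulSupport (fun a => (placeAt a).symbol f g) ⊆
      (Function.support fun a => nuAt a f) ∪ Function.support fun a => nuAt a g := by
  intro a ha
  by_contra h
  simp only [Set.mem_union, Function.mem_support, not_or, not_not] at h
  exact ha ((placeAt a).symbol_eq_one h.1 h.2)

theorem hasFiniteMulSupport_symbol (f g : RatFunc k) :
    Function.HasFiniteMulSupport fun a => (placeAt a).symbol f g :=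
  ((finite_support_nuAt f).union (finite_support_nuAt g)).subset (mulSupport_symbol_subset f g)

theorem weilProduct_mul_left {f₁ f₂ g : RatFunc k} (hf₁ : f₁ ≠ 0) (hf₂ : f₂ ≠ 0) (hg : g ≠ 0) :
    weilProduct (f₁ * f₂) g = weilProduct f₁ g * weilProduct f₂ g := by
  simp only [weilProduct, TamePlace.symbol_mul_left _ hf₁ hf₂ hg,
    finprod_mul_distrib (hasFiniteMulSupport_symbol f₁ g) (hasFiniteMulSupport_symbol f₂ g)]
  ring

theorem weilProduct_swap {f g : RatFunc k} (hf : f ≠ 0) (hg : g ≠ 0) :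
    weilProduct g f = (weilProduct f g)⁻¹ := by
  simp only [weilProduct, TamePlace.symbol_swap _ hf hg, finprod_inv_distrib, mul_inv]

theorem nuAt_X_sub_C_self (a : k) : nuAt a (RatFunc.X - RatFunc.C a) = 1 := by
  rw [RatFunc.X_sub_C_eq_algebraMap, nuAt_algebraMap, rootMultiplicity_X_sub_C_self]; rfl

theorem nuAt_X_sub_C_of_ne {a b : k} (h : b ≠ a) : nuAt b (RatFunc.X - RatFunc.C a) = 0 := by
  rw [RatFunc.X_sub_C_eq_algebraMap, nuAt_algebraMap,
    rootMultiplicity_eq_zero (by simpa [sub_eq_zero])]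
  rfl

theorem nuAt_C (b c : k) : nuAt b (RatFunc.C c) = 0 := by
  rw [← RatFunc.algebraMap_C, nuAt_algebraMap, rootMultiplicity_C]; rfl

theorem eval_X_sub_C (b a : k) :
    RatFunc.eval (RingHom.id k) b (RatFunc.X - RatFunc.C a) = b - a := by
  rw [RatFunc.X_sub_C_eq_algebraMap, RatFunc.eval_algebraMap]
  simp

theorem nuInf_X_sub_C (a : k) : nuInf (RatFunc.X - RatFunc.C a) = -1 := by
  rw [nuInf, RatFunc.X_sub_C_eq_algebraMap, RatFunc.intDegree_polynomial, natDegree_X_sub_C]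
  rfl

theorem nuInf_C (c : k) : nuInf (RatFunc.C c) = 0 := by
  simp [nuInf]

theorem leadingCoeff_num_X_sub_C (a : k) : (RatFunc.X - RatFunc.C a).num.leadingCoeff = 1 := by
  rw [RatFunc.X_sub_C_eq_algebraMap, RatFunc.num_algebraMap, leadingCoeff_X_sub_C]

theorem weilProduct_C_C (c d : k) : weilProduct (RatFunc.C c) (RatFunc.C d) = 1 := by
  simp [weilProduct, TamePlace.symbol_eq_one, nuAt_C, nuInf_C]

theorem weilProduct_C_X_sub_C {c : k} (hc : c ≠ 0) (a : k) :
    weilProduct (RatFunc.C c) (RatFunc.X - RatFunc.C a) = 1 := by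
  have hC : RatFunc.C c ≠ 0 := (_root_.map_ne_zero _).2 hc
  have hfin : ∏ᶠ b, (placeAt b).symbol (RatFunc.C c) (RatFunc.X - RatFunc.C a) = c := by
    rw [finprod_eq_single _ a fun b hb =>
        (placeAt b).symbol_eq_one (nuAt_C b c) (nuAt_X_sub_C_of_ne hb),
      (placeAt a).symbol_of_ν_left_eq_zero hC (nuAt_C a c)]
    simp [nuAt_X_sub_C_self]
  rw [weilProduct, hfin, placeInf.symbol_of_ν_left_eq_zero hC (nuInf_C c)]
  simp [nuInf_X_sub_C, hc]

theorem weilProduct_X_sub_C_self (a : k) :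
    weilProduct (RatFunc.X - RatFunc.C a) (RatFunc.X - RatFunc.C a) = 1 := by
  rw [weilProduct, finprod_eq_single _ a fun b hb =>
      (placeAt b).symbol_eq_one (nuAt_X_sub_C_of_ne hb) (nuAt_X_sub_C_of_ne hb),
    TamePlace.symbol_self _ (RatFunc.X_sub_C_ne_zero a),
    TamePlace.symbol_self _ (RatFunc.X_sub_C_ne_zero a)]
  simp [nuAt_X_sub_C_self, nuInf_X_sub_C]

theorem weilProduct_X_sub_C_of_ne {a b : k} (hab : a ≠ b) :
    weilProduct (RatFunc.X - RatFunc.C a) (RatFunc.X - RatFunc.C b) = 1 := by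
  classical
  have hsupp : Function.mulSupport
      (fun c => (placeAt c).symbol (RatFunc.X - RatFunc.C a) (RatFunc.X - RatFunc.C b)) ⊆
        ({a, b} : Finset k) := by
    intro c hc
    by_contra h
    simp only [Finset.coe_insert, Finset.coe_singleton, Set.mem_insert_iff,
      Set.mem_singleton_iff, not_or] at h
    exact hc ((placeAt c).symbol_eq_one (nuAt_X_sub_C_of_ne h.1) (nuAt_X_sub_C_of_ne h.2))
  have ha : (placeAt a).symbol (RatFunc.X - RatFunc.C a) (RatFunc.X - RatFunc.C b) = (a - b)⁻¹ := by
    rw [TamePlace.symbol_swap _ (RatFunc.X_sub_C_ne_zero b) (RatFunc.X_sub_C_ne_zero a),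
      TamePlace.symbol_of_ν_left_eq_zero _ (RatFunc.X_sub_C_ne_zero b) (nuAt_X_sub_C_of_ne hab)]
    simp [nuAt_X_sub_C_self, eval_X_sub_C]
  have hb : (placeAt b).symbol (RatFunc.X - RatFunc.C a) (RatFunc.X - RatFunc.C b) = b - a := by
    rw [TamePlace.symbol_of_ν_left_eq_zero _ (RatFunc.X_sub_C_ne_zero a)
      (nuAt_X_sub_C_of_ne hab.symm)]
    simp [nuAt_X_sub_C_self, eval_X_sub_C]
  have hinf : placeInf.symbol (RatFunc.X - RatFunc.C a) (RatFunc.X - RatFunc.C b) = -1 := by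
    simp [TamePlace.symbol, nuInf_X_sub_C, RatFunc.leadingCoeff_num_mul,
      RatFunc.leadingCoeff_num_inv, leadingCoeff_num_X_sub_C]
  rw [weilProduct, finprod_eq_prod_of_mulSupport_subset _ hsupp, Finset.prod_pair hab, ha, hb,
    hinf]
  field_simp [sub_ne_zero.2 hab]
  ring

section

variable [IsAlgClosed k]

theorem weilProduct_X_sub_C_right {f : RatFunc k} (hf : f ≠ 0) (b : k) :
    weilProduct f (RatFunc.X - RatFunc.C b) = 1 :=
  RatFunc.eq_one_of_map_mul_of_X_sub_C_of_C (φ := (weilProduct · (RatFunc.X - RatFunc.C b)))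
    (fun hf₁ hf₂ => weilProduct_mul_left hf₁ hf₂ (RatFunc.X_sub_C_ne_zero b))
    (fun a => by
      rcases eq_or_ne a b with rfl | hab
      exacts [weilProduct_X_sub_C_self a, weilProduct_X_sub_C_of_ne hab])
    (fun _ hc => weilProduct_C_X_sub_C hc b) hf

theorem weilProduct_C_right {f : RatFunc k} (hf : f ≠ 0) {d : k} (hd : d ≠ 0) :
    weilProduct f (RatFunc.C d) = 1 :=
  RatFunc.eq_one_of_map_mul_of_X_sub_C_of_C (φ := (weilProduct · (RatFunc.C d)))
    (fun hf₁ hf₂ => weilProduct_mul_left hf₁ hf₂ ((_root_.map_ne_zero _).2 hd))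
    (fun a => by
      rw [weilProduct_swap ((_root_.map_ne_zero _).2 hd) (RatFunc.X_sub_C_ne_zero a),
        weilProduct_C_X_sub_C hd, inv_one])
    (fun c _ => weilProduct_C_C c d) hf

theorem weilProduct_eq_one {f g : RatFunc k} (hf : f ≠ 0) (hg : g ≠ 0) : weilProduct f g = 1 :=
  RatFunc.eq_one_of_map_mul_of_X_sub_C_of_C (φ := (weilProduct · g))
    (fun hf₁ hf₂ => weilProduct_mul_left hf₁ hf₂ hg)
    (fun a => by
      rw [weilProduct_swap hg (RatFunc.X_sub_C_ne_zero a), weilProduct_X_sub_C_right hg, inv_one])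
    (fun c hc => by
      rw [weilProduct_swap hg ((_root_.map_ne_zero _).2 hc), weilProduct_C_right hg hc, inv_one])
    hf

end

end WeilReciprocity

/-- Weil reciprocity for `ℙ¹` over an algebraically closed field: the product over all
closed points (finite points and `∞`) of the tame symbols of two nonzero rational
functions equals `1`. -/
theorem stmt15 {k : Type*} [Field k] [IsAlgClosed k] (f g : RatFunc k)
    (hf : f ≠ 0) (hg : g ≠ 0) :
    (∏ᶠ a : k, tameAt a f g) * tameInf f g = 1 := by
  simpa only [WeilReciprocity.weilProduct, ← WeilReciprocity.tameAt_eq_symbol,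
    ← WeilReciprocity.tameInf_eq_symbol] using WeilReciprocity.weilProduct_eq_one hf hg
end
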